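/- arXiv:2509.14502 — 3 statements merged into one kernel-verified Lean document; each statement's English description precedes it below -/
import Mathlib

section
/- The WATE estimating function is unbiased at the truth: E[D] = E[λ(e)] and E[N] = E[λ(e)·τ]; consequently, if E[λ(e)] ≠ 0 and γ₀ = E[λ(e)·τ]/E[λ(e)], then E[γ₀·D − N] = 0. -/
open MeasureTheory Filter

/-- If `g` is `mX`-strongly measurable, `X` is integrable with `E[X|mX] = 0` a.e., and
`g·X` is integrable, then `E[g·X] = 0`. -/
lemma integral_mul_eq_zero_of_condexp_zero
    {Ω : Type*} [F : MeasurableSpace Ω] {μ : Measure Ω} [IsProbabilityMeasure μ]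
    {mX : MeasurableSpace Ω} (hmX : mX ≤ F)
    {g X : Ω → ℝ} (hg : StronglyMeasurable[mX] g) (hX : Integrable X μ)
    (hgX : Integrable (fun ω => g ω * X ω) μ) (hc : μ[X|mX] =ᵐ[μ] 0) :
    ∫ ω, g ω * X ω ∂μ = 0 := by
  have h1 : μ[(fun ω => g ω * X ω)|mX] =ᵐ[μ] fun ω => g ω * (μ[X|mX]) ω :=
    condExp_mul_of_stronglyMeasurable_left hg hgX hX
  have h2 : μ[(fun ω => g ω * X ω)|mX] =ᵐ[μ] (fun _ => (0 : ℝ)) := by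
    filter_upwards [h1, hc] with ω hω1 hω2
    simp [hω1, hω2]
  calc ∫ ω, g ω * X ω ∂μ = ∫ ω, (μ[(fun ω => g ω * X ω)|mX]) ω ∂μ :=
        (integral_condExp hmX).symm
    _ = 0 := by rw [integral_congr_ae h2, integral_zero]

/-- The WATE estimating function is unbiased at the truth:
`E[D] = E[λ(e)]` and `E[N] = E[λ(e)·τ]`; consequently, if `E[λ(e)] ≠ 0` and
`γ₀ = E[λ(e)·τ]/E[λ(e)]`, then `E[γ₀·D − N] = 0`. -/
theorem wate_score_unbiased
    {Ω : Type*} {mX : MeasurableSpace Ω} [F : MeasurableSpace Ω] {μ : Measure Ω} [IsProbabilityMeasure μ]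
    (hmX : mX ≤ F)
    {A Y e μ0 μ1 : Ω → ℝ}
    (hA : Measurable A) (hY : Measurable Y) (hYint : Integrable Y μ)
    (hAbin : ∀ᵐ ω ∂μ, A ω = 0 ∨ A ω = 1)
    (he : Measurable[mX] e) (hμ0m : Measurable[mX] μ0) (hμ1m : Measurable[mX] μ1)
    (he01 : ∀ᵐ ω ∂μ, 0 < e ω ∧ e ω < 1)
    (hcA : μ[A|mX] =ᵐ[μ] e)
    (hcAY1 : μ[(fun ω => A ω * Y ω)|mX] =ᵐ[μ] (fun ω => e ω * μ1 ω))
    (hcAY0 : μ[(fun ω => (1 - A ω) * Y ω)|mX] =ᵐ[μ] (fun ω => (1 - e ω) * μ0 ω))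
    {τ ψ : Ω → ℝ}
    (hτ : τ = fun ω => μ1 ω - μ0 ω)
    (hψ : ψ = fun ω => (A ω / e ω) * (Y ω - μ1 ω)
        - ((1 - A ω) / (1 - e ω)) * (Y ω - μ0 ω))
    {lam lam' : ℝ → ℝ} (hlam : ∀ t, HasDerivAt lam (lam' t) t)
    {D N : Ω → ℝ}
    (hD : D = fun ω => lam (e ω) + lam' (e ω) * (A ω - e ω))
    (hN : N = fun ω => lam (e ω) * (ψ ω + τ ω) + lam' (e ω) * τ ω * (A ω - e ω))
    (hDint : Integrable D μ) (hNint : Integrable N μ)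
    (hlame : Integrable (fun ω => lam (e ω)) μ)
    (hlametau : Integrable (fun ω => lam (e ω) * τ ω) μ) :
    (∫ ω, D ω ∂μ = ∫ ω, lam (e ω) ∂μ) ∧
    (∫ ω, N ω ∂μ = ∫ ω, lam (e ω) * τ ω ∂μ) ∧
    ∀ γ₀ : ℝ, (∫ ω, lam (e ω) ∂μ) ≠ 0 →
      γ₀ = (∫ ω, lam (e ω) * τ ω ∂μ) / (∫ ω, lam (e ω) ∂μ) →
      ∫ ω, (γ₀ * D ω - N ω) ∂μ = 0 := by
  -- basic measurability
  have hlamC : Continuous lam :=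
    continuous_iff_continuousAt.2 fun t => (hlam t).continuousAt
  have hlam'm : Measurable lam' := by
    have : lam' = deriv lam := funext fun t => ((hlam t).deriv).symm
    rw [this]; exact measurable_deriv lam
  have hle : Measurable[mX] fun ω => lam (e ω) := hlamC.measurable.comp he
  have hle' : Measurable[mX] fun ω => lam' (e ω) := hlam'm.comp he
  have hτm : Measurable[mX] τ := by rw [hτ]; exact hμ1m.sub hμ0m
  -- basic integrability
  have hAint : Integrable A μ := by
    refine Integrable.mono' (integrable_const (1 : ℝ)) (hA.aestronglyMeasurable (μ := μ)) ?_
    filter_upwards [hAbin] with ω hω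
    rcases hω with h | h <;> simp [h]
  have heint : Integrable e μ := by
    refine Integrable.mono' (integrable_const (1 : ℝ)) (he.mono hmX le_rfl).aestronglyMeasurable ?_
    filter_upwards [he01] with ω hω
    rw [Real.norm_eq_abs, abs_of_pos hω.1]; linarith [hω.2]
  have hWint : Integrable (fun ω => A ω - e ω) μ := hAint.sub heint
  have hce : μ[e|mX] = e :=
    condExp_of_stronglyMeasurable hmX he.stronglyMeasurable heint
  have hcW : μ[(fun ω => A ω - e ω)|mX] =ᵐ[μ] (fun _ => (0 : ℝ)) := by
    have h0 : μ[(fun ω => A ω - e ω)|mX] =ᵐ[μ] μ[A|mX] - μ[e|mX] :=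
      condExp_sub (m := mX) hAint heint
    filter_upwards [h0, hcA] with ω h1 h2
    rw [h1, Pi.sub_apply, h2, hce, sub_self]
  -- Part 1
  have hint1 : Integrable (fun ω => lam' (e ω) * (A ω - e ω)) μ := by
    have h := hDint.sub hlame
    refine h.congr (by filter_upwards with ω; simp [hD])
  have hz1 : ∫ ω, lam' (e ω) * (A ω - e ω) ∂μ = 0 :=
    integral_mul_eq_zero_of_condexp_zero (F := F) hmX hle'.stronglyMeasurable hWint hint1 hcW
  have part1 : ∫ ω, D ω ∂μ = ∫ ω, lam (e ω) ∂μ := by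
    have : ∫ ω, D ω ∂μ
        = ∫ ω, (lam (e ω) + lam' (e ω) * (A ω - e ω)) ∂μ := by rw [hD]
    rw [this, integral_add hlame hint1, hz1, add_zero]
  -- Part 2 setup
  set U : Ω → ℝ := fun ω => A ω * Y ω - e ω * μ1 ω with hU_def
  set V : Ω → ℝ := fun ω => (1 - A ω) * Y ω - (1 - e ω) * μ0 ω with hV_def
  set W : Ω → ℝ := fun ω => A ω - e ω with hW_def
  set hw : Ω → ℝ := fun ω => lam (e ω) / e ω with hh_def
  set kw : Ω → ℝ := fun ω => -(lam (e ω) / (1 - e ω)) with hk_def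
  set gw : Ω → ℝ := fun ω =>
    lam' (e ω) * τ ω - lam (e ω) / e ω * μ1 ω - lam (e ω) / (1 - e ω) * μ0 ω with hg_def
  set f : Ω → ℝ := fun ω => N ω - lam (e ω) * τ ω with hf_def
  have hAY : Integrable (fun ω => A ω * Y ω) μ := by
    refine hYint.abs.mono' ((hA.mul hY).aestronglyMeasurable (μ := μ)) ?_
    filter_upwards [hAbin] with ω hω
    rcases hω with h | h <;> simp [h]
  have h1AY : Integrable (fun ω => (1 - A ω) * Y ω) μ := by
    refine hYint.abs.mono' (((measurable_const.sub hA).mul hY).aestronglyMeasurable (μ := μ)) ?_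
    filter_upwards [hAbin] with ω hω
    rcases hω with h | h <;> simp [h]
  have heμ1 : Integrable (fun ω => e ω * μ1 ω) μ := integrable_condExp.congr hcAY1
  have heμ0 : Integrable (fun ω => (1 - e ω) * μ0 ω) μ := integrable_condExp.congr hcAY0
  have hUint : Integrable U μ := hAY.sub heμ1
  have hVint : Integrable V μ := h1AY.sub heμ0
  have hceμ1 : μ[(fun ω => e ω * μ1 ω)|mX] = fun ω => e ω * μ1 ω :=
    condExp_of_stronglyMeasurable hmX (he.mul hμ1m).stronglyMeasurable heμ1
  have hceμ0 : μ[(fun ω => (1 - e ω) * μ0 ω)|mX] = fun ω => (1 - e ω) * μ0 ω :=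
    condExp_of_stronglyMeasurable hmX
      ((measurable_const.sub he).mul hμ0m).stronglyMeasurable heμ0
  have hcU : μ[U|mX] =ᵐ[μ] (fun _ => (0 : ℝ)) := by
    have h0 : μ[U|mX] =ᵐ[μ]
        μ[(fun ω => A ω * Y ω)|mX] - μ[(fun ω => e ω * μ1 ω)|mX] :=
      condExp_sub (m := mX) hAY heμ1
    filter_upwards [h0, hcAY1] with ω h1 h2
    rw [h1, Pi.sub_apply, h2, hceμ1]
    simp
  have hcV : μ[V|mX] =ᵐ[μ] (fun _ => (0 : ℝ)) := by
    have h0 : μ[V|mX] =ᵐ[μ]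
        μ[(fun ω => (1 - A ω) * Y ω)|mX] - μ[(fun ω => (1 - e ω) * μ0 ω)|mX] :=
      condExp_sub (m := mX) h1AY heμ0
    filter_upwards [h0, hcAY0] with ω h1 h2
    rw [h1, Pi.sub_apply, h2, hceμ0]
    simp
  have hfint : Integrable f μ := hNint.sub hlametau
  -- measurability of the weights
  have hhm : Measurable[mX] hw := hle.div he
  have hkm : Measurable[mX] kw := (hle.div (measurable_const.sub he)).neg
  have hgm : Measurable[mX] gw :=
    ((hle'.mul hτm).sub ((hle.div he).mul hμ1m)).sub
      ((hle.div (measurable_const.sub he)).mul hμ0m)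
  -- a.e. decomposition
  have decomp : ∀ᵐ ω ∂μ, f ω = hw ω * U ω + kw ω * V ω + gw ω * W ω := by
    filter_upwards [he01] with ω hω
    have he0 : e ω ≠ 0 := ne_of_gt hω.1
    have he1 : (1 : ℝ) - e ω ≠ 0 := by have := hω.2; intro h; linarith [sub_eq_zero.mp h]
    simp only [hf_def, hU_def, hV_def, hW_def, hh_def, hk_def, hg_def, hN, hψ, hτ]
    field_simp
    ring
  -- truncation sets
  set s : ℕ → Set Ω := fun n => {ω | |hw ω| ≤ n ∧ |kw ω| ≤ n ∧ |gw ω| ≤ n} with hs_def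
  have hs_meas : ∀ n, MeasurableSet[mX] (s n) := by
    intro n
    exact ((measurableSet_le (mδ := mX) (continuous_abs.measurable.comp hhm) measurable_const).inter
      ((measurableSet_le (mδ := mX) (continuous_abs.measurable.comp hkm) measurable_const).inter
        (measurableSet_le (mδ := mX) (continuous_abs.measurable.comp hgm) measurable_const)))
  set χ : ℕ → Ω → ℝ := fun n => (s n).indicator (fun _ => (1 : ℝ)) with hχ_def
  have hχm : ∀ n, Measurable[mX] (χ n) := fun n =>
    measurable_const.indicator (hs_meas n)
  have hχ01 : ∀ n ω, χ n ω = 0 ∨ χ n ω = 1 := by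
    intro n ω
    by_cases h : ω ∈ s n <;> simp [hχ_def, Set.indicator, h]
  -- each truncated integral vanishes
  have hzero : ∀ n : ℕ, ∫ ω, χ n ω * f ω ∂μ = 0 := by
    intro n
    have bdd : ∀ (w : Ω → ℝ), (∀ ω, ω ∈ s n → |w ω| ≤ n) →
        ∀ ω, ‖χ n ω * w ω‖ ≤ n := by
      intro w hwb ω
      by_cases h : ω ∈ s n
      · simp only [hχ_def, Set.indicator_of_mem h, one_mul, Real.norm_eq_abs]
        exact hwb ω h
      · simp [hχ_def, Set.indicator_of_notMem h, Nat.cast_nonneg]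
    have hbh : ∀ ω, ‖χ n ω * hw ω‖ ≤ n := bdd hw fun ω h => h.1
    have hbk : ∀ ω, ‖χ n ω * kw ω‖ ≤ n := bdd kw fun ω h => h.2.1
    have hbg : ∀ ω, ‖χ n ω * gw ω‖ ≤ n := bdd gw fun ω h => h.2.2
    have hiU : Integrable (fun ω => (χ n ω * hw ω) * U ω) μ :=
      hUint.bdd_mul (((hχm n).mul hhm).mono hmX le_rfl).aestronglyMeasurable (c := n) (ae_of_all _ hbh)
    have hiV : Integrable (fun ω => (χ n ω * kw ω) * V ω) μ :=
      hVint.bdd_mul (((hχm n).mul hkm).mono hmX le_rfl).aestronglyMeasurable (c := n) (ae_of_all _ hbk)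
    have hiW : Integrable (fun ω => (χ n ω * gw ω) * W ω) μ :=
      hWint.bdd_mul (((hχm n).mul hgm).mono hmX le_rfl).aestronglyMeasurable (c := n) (ae_of_all _ hbg)
    have e1 : ∫ ω, (χ n ω * hw ω) * U ω ∂μ = 0 :=
      integral_mul_eq_zero_of_condexp_zero (F := F) hmX ((hχm n).mul hhm).stronglyMeasurable
        hUint hiU hcU
    have e2 : ∫ ω, (χ n ω * kw ω) * V ω ∂μ = 0 :=
      integral_mul_eq_zero_of_condexp_zero (F := F) hmX ((hχm n).mul hkm).stronglyMeasurable
        hVint hiV hcV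
    have e3 : ∫ ω, (χ n ω * gw ω) * W ω ∂μ = 0 :=
      integral_mul_eq_zero_of_condexp_zero (F := F) hmX ((hχm n).mul hgm).stronglyMeasurable
        hWint hiW hcW
    have heq : (fun ω => χ n ω * f ω) =ᵐ[μ]
        fun ω => (χ n ω * hw ω) * U ω + (χ n ω * kw ω) * V ω + (χ n ω * gw ω) * W ω := by
      filter_upwards [decomp] with ω hω
      rw [hω]; ring
    have hiUV : Integrable
        (fun ω => (χ n ω * hw ω) * U ω + (χ n ω * kw ω) * V ω) μ := hiU.add hiV
    rw [integral_congr_ae heq, integral_add hiUV hiW, integral_add hiU hiV,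
      e1, e2, e3]
    ring
  -- dominated convergence
  have hfz : ∫ ω, f ω ∂μ = 0 := by
    have hFi : ∀ n, Integrable (fun ω => χ n ω * f ω) μ := by
      intro n
      refine hfint.bdd_mul (((hχm n).mono hmX le_rfl)).aestronglyMeasurable (c := 1) (ae_of_all _ ?_)
      intro ω; rcases hχ01 n ω with h | h <;> simp [h]
    have htend : Tendsto (fun n => ∫ ω, χ n ω * f ω ∂μ) atTop (nhds (∫ ω, f ω ∂μ)) := by
      refine tendsto_integral_of_dominated_convergence (fun ω => |f ω|)
        (fun n => (hFi n).aestronglyMeasurable) hfint.abs ?_ ?_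
      · intro n
        filter_upwards with ω
        rcases hχ01 n ω with h | h <;> simp [h, abs_nonneg]
      · filter_upwards with ω
        have hev : ∀ᶠ n in atTop, χ n ω * f ω = f ω := by
          filter_upwards [eventually_ge_atTop
            (⌈max (|hw ω|) (max (|kw ω|) (|gw ω|))⌉₊)] with n hn
          have hmem : ω ∈ s n := by
            have h1 : max (|hw ω|) (max (|kw ω|) (|gw ω|)) ≤ n := by
              calc max (|hw ω|) (max (|kw ω|) (|gw ω|))
                  ≤ (⌈max (|hw ω|) (max (|kw ω|) (|gw ω|))⌉₊ : ℝ) := Nat.le_ceil _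
                _ ≤ n := Nat.cast_le.mpr hn
            refine ⟨le_trans (le_max_left _ _) h1,
              le_trans (le_trans (le_max_left _ _) (le_max_right _ _)) h1,
              le_trans (le_trans (le_max_right _ _) (le_max_right _ _)) h1⟩
          simp [hχ_def, Set.indicator_of_mem hmem]
        exact tendsto_const_nhds.congr' (by filter_upwards [hev] with n hn; rw [hn])
    have h0' : Tendsto (fun _ : ℕ => (0 : ℝ)) atTop (nhds (∫ ω, f ω ∂μ)) :=
      Tendsto.congr hzero htend
    exact (tendsto_nhds_unique h0' tendsto_const_nhds)
  have part2 : ∫ ω, N ω ∂μ = ∫ ω, lam (e ω) * τ ω ∂μ := by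
    have : ∫ ω, N ω ∂μ = ∫ ω, (f ω + lam (e ω) * τ ω) ∂μ := by
      refine integral_congr_ae ?_
      filter_upwards with ω
      simp [hf_def]
    rw [this, integral_add hfint hlametau, hfz, zero_add]
  refine ⟨part1, part2, ?_⟩
  intro γ₀ hne hγ
  rw [integral_sub (hDint.const_mul γ₀) hNint, integral_const_mul, part1, part2, hγ]
  field_simp
  ring
end

section
/- Neyman orthogonality of the WATE score (Lemma on the first-order Gateaux derivative): fix δ ∈ (0, 1/2) and a real constant γ₀. Assume λ : ℝ → ℝ is twice continuously differentiable with λ, λ′, λ″ bounded on [0,1]; e and an mX-measurable ẽ take values in [δ, 1−δ] a.s.; μ₀, μ₁ and the mX-measurable perturbations μ̃₀, μ̃₁ are bounded; Y is square-integrable. For r ∈ [0,1] set e_r = e + r(ẽ − e), μ_{a,r} = μ_a + r(μ̃_a − μ_a) for a = 0,1, and L_r = γ₀·[λ(e_r) + λ′(e_r)(A − e_r)] − [λ(e_r)·((A/e_r)(Y − μ_{1,r}) − ((1−A)/(1−e_r))(Y − μ_{0,r}) + (μ_{1,r} − μ_{0,r})) + λ′(e_r)·(μ_{1,r} − μ_{0,r})·(A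 − e_r)]. Then the map r ↦ E[L_r] is differentiable at r = 0 with derivative equal to 0. -/
set_option maxHeartbeats 2000000

open MeasureTheory

private theorem bnd {x c z d : ℝ} (h1 : |x| ≤ c) (h2 : |z| ≤ d) : |x * z| ≤ c * d := by
  rw [abs_mul]
  exact mul_le_mul h1 h2 (abs_nonneg _) ((abs_nonneg _).trans h1)

private theorem bsub {x z : ℝ} : |x - z| ≤ |x| + |z| := by
  simpa [sub_eq_add_neg] using (abs_add_le x (-z))

noncomputable def wS (lam lam' : ℝ → ℝ) (γ₀ a y ee m0 m1 de d0 d1 r : ℝ) : ℝ :=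
  γ₀ * (lam (ee + r * de) + lam' (ee + r * de) * (a - (ee + r * de)))
    - (lam (ee + r * de)
        * ((a / (ee + r * de)) * (y - (m1 + r * d1))
          - ((1 - a) / (1 - (ee + r * de))) * (y - (m0 + r * d0))
          + ((m1 + r * d1) - (m0 + r * d0)))
      + lam' (ee + r * de) * ((m1 + r * d1) - (m0 + r * d0)) * (a - (ee + r * de)))

noncomputable def wSD (lam lam' lam'' : ℝ → ℝ) (γ₀ a y ee m0 m1 de d0 d1 r : ℝ) : ℝ :=
  γ₀ * (lam' (ee + r * de) * de
      + (lam'' (ee + r * de) * de * (a - (ee + r * de)) - lam' (ee + r * de) * de))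
    - ((lam' (ee + r * de) * de)
        * ((a / (ee + r * de)) * (y - (m1 + r * d1))
          - ((1 - a) / (1 - (ee + r * de))) * (y - (m0 + r * d0))
          + ((m1 + r * d1) - (m0 + r * d0)))
      + lam (ee + r * de)
        * ((-(a * de) / (ee + r * de) ^ 2) * (y - (m1 + r * d1))
            + (a / (ee + r * de)) * (-d1)
          - (((1 - a) * de / (1 - (ee + r * de)) ^ 2) * (y - (m0 + r * d0))
              + ((1 - a) / (1 - (ee + r * de))) * (-d0))
          + (d1 - d0))
      + ((lam'' (ee + r * de) * de * ((m1 + r * d1) - (m0 + r * d0))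
            + lam' (ee + r * de) * (d1 - d0)) * (a - (ee + r * de))
        + lam' (ee + r * de) * ((m1 + r * d1) - (m0 + r * d0)) * (-de)))

noncomputable def wW1 (lam lam' : ℝ → ℝ) (ee de : ℝ) : ℝ :=
  lam ee * de / ee ^ 2 - lam' ee * de / ee

noncomputable def wW2 (lam lam' : ℝ → ℝ) (ee de : ℝ) : ℝ :=
  lam' ee * de / (1 - ee) + lam ee * de / (1 - ee) ^ 2

noncomputable def wW3 (lam lam' lam'' : ℝ → ℝ) (γ₀ ee m0 m1 de d0 d1 : ℝ) : ℝ :=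
  γ₀ * lam'' ee * de
    - (lam' ee * de * (-(m1 / ee) - m0 / (1 - ee))
      + lam ee * (de * m1 / ee ^ 2 - d1 / ee - de * m0 / (1 - ee) ^ 2 - d0 / (1 - ee))
      + lam'' ee * de * (m1 - m0) + lam' ee * (d1 - d0))

noncomputable def wW4 (lam lam' lam'' : ℝ → ℝ) (γ₀ ee m0 m1 de d0 d1 : ℝ) : ℝ :=
  -(γ₀ * lam'' ee * de * ee)
    - (lam' ee * de * (m0 / (1 - ee) + m1 - m0)
      + lam ee * (de * m0 / (1 - ee) ^ 2 + d0 / (1 - ee) + d1 - d0)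
      - ee * (lam'' ee * de * (m1 - m0) + lam' ee * (d1 - d0))
      - lam' ee * (m1 - m0) * de)

theorem wS_hasDerivAt {lam lam' lam'' : ℝ → ℝ}
    (hlam1 : ∀ t, HasDerivAt lam (lam' t) t)
    (hlam2 : ∀ t, HasDerivAt lam' (lam'' t) t)
    (γ₀ a y ee m0 m1 de d0 d1 r : ℝ)
    (h0 : ee + r * de ≠ 0) (h1 : 1 - (ee + r * de) ≠ 0) :
    HasDerivAt (fun s => wS lam lam' γ₀ a y ee m0 m1 de d0 d1 s)
      (wSD lam lam' lam'' γ₀ a y ee m0 m1 de d0 d1 r) r := by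
  have h_er : HasDerivAt (fun s : ℝ => ee + s * de) de r := by
    simpa using ((hasDerivAt_id r).mul_const de).const_add ee
  have h_n1 : HasDerivAt (fun s : ℝ => m1 + s * d1) d1 r := by
    simpa using ((hasDerivAt_id r).mul_const d1).const_add m1
  have h_n0 : HasDerivAt (fun s : ℝ => m0 + s * d0) d0 r := by
    simpa using ((hasDerivAt_id r).mul_const d0).const_add m0
  have hL : HasDerivAt (fun s : ℝ => lam (ee + s * de)) (lam' (ee + r * de) * de) r :=
    (hlam1 _).comp r h_er
  have hL' : HasDerivAt (fun s : ℝ => lam' (ee + s * de)) (lam'' (ee + r * de) * de) r :=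
    (hlam2 _).comp r h_er
  have hAsub : HasDerivAt (fun s : ℝ => a - (ee + s * de)) (-de) r := h_er.const_sub a
  have hdiv1 : HasDerivAt (fun s : ℝ => a / (ee + s * de))
      ((0 * (ee + r * de) - a * de) / (ee + r * de) ^ 2) r :=
    (hasDerivAt_const r a).div h_er h0
  have h1er : HasDerivAt (fun s : ℝ => 1 - (ee + s * de)) (-de) r := h_er.const_sub 1
  have hdiv0 : HasDerivAt (fun s : ℝ => (1 - a) / (1 - (ee + s * de)))
      ((0 * (1 - (ee + r * de)) - (1 - a) * -de) / (1 - (ee + r * de)) ^ 2) r :=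
    (hasDerivAt_const r (1 - a)).div h1er h1
  have hy1 : HasDerivAt (fun s : ℝ => y - (m1 + s * d1)) (-d1) r := h_n1.const_sub y
  have hy0 : HasDerivAt (fun s : ℝ => y - (m0 + s * d0)) (-d0) r := h_n0.const_sub y
  have hnd : HasDerivAt (fun s : ℝ => (m1 + s * d1) - (m0 + s * d0)) (d1 - d0) r := h_n1.sub h_n0
  have hPhi := ((hdiv1.mul hy1).sub (hdiv0.mul hy0)).add hnd
  have hG := (hL.add (hL'.mul hAsub)).const_mul γ₀
  have hB := (hL.mul hPhi).add ((hL'.mul hnd).mul hAsub)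
  have total := hG.sub hB
  refine total.congr_deriv ?_
  unfold wSD
  simp only [Pi.mul_apply, Pi.add_apply, Pi.sub_apply]
  ring

section RB
variable {lam lam' lam'' : ℝ → ℝ} {M Cb B γ₀ a y ee m0 m1 de d0 d1 r : ℝ}

theorem atomic_bounds (ha0 : 0 ≤ a) (ha1 : a ≤ 1)
    (her0 : 0 < ee + r * de) (her1 : ee + r * de < 1)
    (hB : (ee + r * de)⁻¹ ≤ B) (hB' : (1 - (ee + r * de))⁻¹ ≤ B) :
    |a / (ee + r * de)| ≤ B ∧ |(1 - a) / (1 - (ee + r * de))| ≤ B ∧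
      |(-(a * de)) / (ee + r * de) ^ 2| ≤ B ^ 2 * |de| ∧
      |(1 - a) * de / (1 - (ee + r * de)) ^ 2| ≤ B ^ 2 * |de| ∧ 0 ≤ B := by
  set er := ee + r * de with her
  have hBe : 1 ≤ B * er := by
    have h := mul_le_mul_of_nonneg_right hB her0.le
    rwa [inv_mul_cancel₀ her0.ne'] at h
  have hB0 : 0 ≤ B := le_trans (inv_pos.2 her0).le hB
  have hBe' : 1 ≤ B * (1 - er) := by
    have h := mul_le_mul_of_nonneg_right hB' (by linarith : (0:ℝ) ≤ 1 - er)
    rwa [inv_mul_cancel₀ (by linarith : (1:ℝ) - er ≠ 0)] at h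
  refine ⟨?_, ?_, ?_, ?_, hB0⟩
  · rw [abs_div, abs_of_pos her0, div_le_iff₀ her0]
    have : |a| = a := abs_of_nonneg ha0
    nlinarith [hBe]
  · rw [abs_div, abs_of_pos (by linarith : (0:ℝ) < 1 - er), div_le_iff₀ (by linarith : (0:ℝ) < 1 - er)]
    have : |1 - a| = 1 - a := abs_of_nonneg (by linarith)
    nlinarith [hBe']
  · rw [abs_div, abs_neg, abs_mul, abs_of_pos (pow_pos her0 2),
      div_le_iff₀ (pow_pos her0 2)]
    have ha : |a| ≤ 1 := by rw [abs_of_nonneg ha0]; exact ha1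
    have h2 : 1 ≤ B ^ 2 * er ^ 2 := by nlinarith [hBe, mul_le_mul hBe hBe (by norm_num) (by positivity)]
    nlinarith [abs_nonneg de, mul_le_mul_of_nonneg_right h2 (abs_nonneg de), ha, her0, sq_nonneg er]
  · have h1e : (0:ℝ) < 1 - er := by linarith
    rw [abs_div, abs_mul, abs_of_pos (pow_pos h1e 2), div_le_iff₀ (pow_pos h1e 2)]
    have ha : |1 - a| ≤ 1 := by rw [abs_of_nonneg (by linarith : (0:ℝ) ≤ 1 - a)]; linarith
    have h2 : 1 ≤ B ^ 2 * (1 - er) ^ 2 := by nlinarith [hBe', mul_le_mul hBe' hBe' (by norm_num) (by positivity)]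
    nlinarith [abs_nonneg de, mul_le_mul_of_nonneg_right h2 (abs_nonneg de), h1e, sq_nonneg (1 - er)]

theorem wSD_bound (hM : 0 ≤ M) (hCb : 0 ≤ Cb)
    (hL : |lam (ee + r * de)| ≤ M) (hL' : |lam' (ee + r * de)| ≤ M)
    (hL'' : |lam'' (ee + r * de)| ≤ M)
    (ha0 : 0 ≤ a) (ha1 : a ≤ 1)
    (her0 : 0 < ee + r * de) (her1 : ee + r * de < 1)
    (hB : (ee + r * de)⁻¹ ≤ B) (hB' : (1 - (ee + r * de))⁻¹ ≤ B)
    (hde : |de| ≤ 1) (hd0 : |d0| ≤ 2 * Cb) (hd1 : |d1| ≤ 2 * Cb)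
    (hn0 : |m0 + r * d0| ≤ 3 * Cb) (hn1 : |m1 + r * d1| ≤ 3 * Cb) :
    |wSD lam lam' lam'' γ₀ a y ee m0 m1 de d0 d1 r| ≤
      |γ₀| * (4 * M) + (M * (2 * B * (|y| + 3 * Cb) + 6 * Cb)
        + M * (2 * (B ^ 2 * (|y| + 3 * Cb)) + 2 * (B * (2 * Cb)) + 4 * Cb)
        + 26 * M * Cb) := by
  obtain ⟨hq1, hq2, hq3, hq4, hB0⟩ := atomic_bounds ha0 ha1 her0 her1 hB hB'
  set er := ee + r * de with her
  set n1 := m1 + r * d1 with hn1'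
  set n0 := m0 + r * d0 with hn0'
  have ham : |a - er| ≤ 2 := by
    have : |a| ≤ 1 := by rw [abs_of_nonneg ha0]; exact ha1
    have her : |er| ≤ 1 := by rw [abs_of_pos her0]; linarith
    calc |a - er| ≤ |a| + |er| := bsub
      _ ≤ 2 := by linarith
  have hy1 : |y - n1| ≤ |y| + 3 * Cb := le_trans bsub (by linarith)
  have hy0 : |y - n0| ≤ |y| + 3 * Cb := le_trans bsub (by linarith)
  have hnd : |n1 - n0| ≤ 6 * Cb := le_trans bsub (by linarith)
  have hdd : |d1 - d0| ≤ 4 * Cb := le_trans bsub (by linarith)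
  have hq3' : |(-(a * de)) / er ^ 2| ≤ B ^ 2 := le_trans hq3 (by nlinarith)
  have hq4' : |(1 - a) * de / (1 - er) ^ 2| ≤ B ^ 2 := le_trans hq4 (by nlinarith)
  have hP1 : |lam' er * de + (lam'' er * de * (a - er) - lam' er * de)| ≤ 4 * M := by
    have b1 : |lam' er * de| ≤ M * 1 := bnd hL' hde
    have b2 : |lam'' er * de * (a - er)| ≤ M * 1 * 2 := bnd (bnd hL'' hde) ham
    calc |lam' er * de + (lam'' er * de * (a - er) - lam' er * de)|
        ≤ |lam' er * de| + |lam'' er * de * (a - er) - lam' er * de| := abs_add_le _ _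
      _ ≤ |lam' er * de| + (|lam'' er * de * (a - er)| + |lam' er * de|) := by
          have := bsub (x := lam'' er * de * (a - er)) (z := lam' er * de); linarith
      _ ≤ 4 * M := by linarith
  have hG : |γ₀ * (lam' er * de + (lam'' er * de * (a - er) - lam' er * de))| ≤ |γ₀| * (4 * M) :=
    bnd le_rfl hP1
  have hPhi : |(a / er) * (y - n1) - ((1 - a) / (1 - er)) * (y - n0) + (n1 - n0)|
      ≤ 2 * B * (|y| + 3 * Cb) + 6 * Cb := by
    have b1 : |(a / er) * (y - n1)| ≤ B * (|y| + 3 * Cb) := bnd hq1 hy1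
    have b2 : |((1 - a) / (1 - er)) * (y - n0)| ≤ B * (|y| + 3 * Cb) := bnd hq2 hy0
    calc |(a / er) * (y - n1) - ((1 - a) / (1 - er)) * (y - n0) + (n1 - n0)|
        ≤ |(a / er) * (y - n1) - ((1 - a) / (1 - er)) * (y - n0)| + |n1 - n0| := abs_add_le _ _
      _ ≤ (|(a / er) * (y - n1)| + |((1 - a) / (1 - er)) * (y - n0)|) + |n1 - n0| := by
          have := bsub (x := (a / er) * (y - n1)) (z := ((1 - a) / (1 - er)) * (y - n0)); linarith
      _ ≤ 2 * B * (|y| + 3 * Cb) + 6 * Cb := by linarith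
  have hT1 : |(lam' er * de) * ((a / er) * (y - n1) - ((1 - a) / (1 - er)) * (y - n0) + (n1 - n0))|
      ≤ (M * 1) * (2 * B * (|y| + 3 * Cb) + 6 * Cb) := bnd (bnd hL' hde) hPhi
  have hPhip : |(-(a * de) / er ^ 2) * (y - n1) + (a / er) * (-d1)
      - (((1 - a) * de / (1 - er) ^ 2) * (y - n0) + ((1 - a) / (1 - er)) * (-d0)) + (d1 - d0)|
      ≤ 2 * (B ^ 2 * (|y| + 3 * Cb)) + 2 * (B * (2 * Cb)) + 4 * Cb := by
    have b1 : |(-(a * de) / er ^ 2) * (y - n1)| ≤ B ^ 2 * (|y| + 3 * Cb) := bnd hq3' hy1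
    have b2 : |(a / er) * (-d1)| ≤ B * (2 * Cb) := bnd hq1 (by rwa [abs_neg])
    have b3 : |((1 - a) * de / (1 - er) ^ 2) * (y - n0)| ≤ B ^ 2 * (|y| + 3 * Cb) := bnd hq4' hy0
    have b4 : |((1 - a) / (1 - er)) * (-d0)| ≤ B * (2 * Cb) := bnd hq2 (by rwa [abs_neg])
    calc |(-(a * de) / er ^ 2) * (y - n1) + (a / er) * (-d1)
        - (((1 - a) * de / (1 - er) ^ 2) * (y - n0) + ((1 - a) / (1 - er)) * (-d0)) + (d1 - d0)|
        ≤ |(-(a * de) / er ^ 2) * (y - n1) + (a / er) * (-d1)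
            - (((1 - a) * de / (1 - er) ^ 2) * (y - n0) + ((1 - a) / (1 - er)) * (-d0))| + |d1 - d0| :=
          abs_add_le _ _
      _ ≤ (|(-(a * de) / er ^ 2) * (y - n1) + (a / er) * (-d1)|
            + |((1 - a) * de / (1 - er) ^ 2) * (y - n0) + ((1 - a) / (1 - er)) * (-d0)|) + |d1 - d0| := by
          have := bsub (x := (-(a * de) / er ^ 2) * (y - n1) + (a / er) * (-d1))
            (z := ((1 - a) * de / (1 - er) ^ 2) * (y - n0) + ((1 - a) / (1 - er)) * (-d0))
          linarith
      _ ≤ ((B ^ 2 * (|y| + 3 * Cb) + B * (2 * Cb))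
            + (B ^ 2 * (|y| + 3 * Cb) + B * (2 * Cb))) + 4 * Cb := by
          have h1 := (abs_add_le ((-(a * de) / er ^ 2) * (y - n1)) ((a / er) * (-d1)))
          have h2 := (abs_add_le (((1 - a) * de / (1 - er) ^ 2) * (y - n0)) (((1 - a) / (1 - er)) * (-d0)))
          linarith
      _ = 2 * (B ^ 2 * (|y| + 3 * Cb)) + 2 * (B * (2 * Cb)) + 4 * Cb := by ring
  have hT2 : |lam er * ((-(a * de) / er ^ 2) * (y - n1) + (a / er) * (-d1)
      - (((1 - a) * de / (1 - er) ^ 2) * (y - n0) + ((1 - a) / (1 - er)) * (-d0)) + (d1 - d0))|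
      ≤ M * (2 * (B ^ 2 * (|y| + 3 * Cb)) + 2 * (B * (2 * Cb)) + 4 * Cb) := bnd hL hPhip
  have hT3 : |(lam'' er * de * (n1 - n0) + lam' er * (d1 - d0)) * (a - er)
      + lam' er * (n1 - n0) * (-de)| ≤ 26 * M * Cb := by
    have b1 : |lam'' er * de * (n1 - n0)| ≤ M * 1 * (6 * Cb) := bnd (bnd hL'' hde) hnd
    have b2 : |lam' er * (d1 - d0)| ≤ M * (4 * Cb) := bnd hL' hdd
    have b3 : |(lam'' er * de * (n1 - n0) + lam' er * (d1 - d0)) * (a - er)|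
        ≤ (M * 1 * (6 * Cb) + M * (4 * Cb)) * 2 := by
      refine bnd ?_ ham
      exact le_trans (abs_add_le _ _) (by linarith)
    have b4 : |lam' er * (n1 - n0) * (-de)| ≤ M * (6 * Cb) * 1 := by
      refine bnd (bnd hL' hnd) (by rwa [abs_neg])
    calc |(lam'' er * de * (n1 - n0) + lam' er * (d1 - d0)) * (a - er)
        + lam' er * (n1 - n0) * (-de)|
        ≤ |(lam'' er * de * (n1 - n0) + lam' er * (d1 - d0)) * (a - er)|
          + |lam' er * (n1 - n0) * (-de)| := abs_add_le _ _
      _ ≤ 26 * M * Cb := by linarith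
  unfold wSD
  rw [← her, ← hn1', ← hn0']
  have step1 := bsub (x := γ₀ * (lam' er * de + (lam'' er * de * (a - er) - lam' er * de)))
    (z := (lam' er * de) * ((a / er) * (y - n1) - ((1 - a) / (1 - er)) * (y - n0) + (n1 - n0))
      + lam er * ((-(a * de) / er ^ 2) * (y - n1) + (a / er) * (-d1)
        - (((1 - a) * de / (1 - er) ^ 2) * (y - n0) + ((1 - a) / (1 - er)) * (-d0)) + (d1 - d0))
      + ((lam'' er * de * (n1 - n0) + lam' er * (d1 - d0)) * (a - er)
        + lam' er * (n1 - n0) * (-de)))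
  have step2 := abs_add_le ((lam' er * de) * ((a / er) * (y - n1) - ((1 - a) / (1 - er)) * (y - n0) + (n1 - n0))
      + lam er * ((-(a * de) / er ^ 2) * (y - n1) + (a / er) * (-d1)
        - (((1 - a) * de / (1 - er) ^ 2) * (y - n0) + ((1 - a) / (1 - er)) * (-d0)) + (d1 - d0)))
    ((lam'' er * de * (n1 - n0) + lam' er * (d1 - d0)) * (a - er)
        + lam' er * (n1 - n0) * (-de))
  have step3 := abs_add_le ((lam' er * de) * ((a / er) * (y - n1) - ((1 - a) / (1 - er)) * (y - n0) + (n1 - n0)))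
    (lam er * ((-(a * de) / er ^ 2) * (y - n1) + (a / er) * (-d1)
        - (((1 - a) * de / (1 - er) ^ 2) * (y - n0) + ((1 - a) / (1 - er)) * (-d0)) + (d1 - d0)))
  linarith

theorem wSD_zero_decomp (h0 : ee ≠ 0) (h1 : (1:ℝ) - ee ≠ 0) :
    wSD lam lam' lam'' γ₀ a y ee m0 m1 de d0 d1 0 =
      wW1 lam lam' ee de * (a * y) + wW2 lam lam' ee de * ((1 - a) * y)
        + wW3 lam lam' lam'' γ₀ ee m0 m1 de d0 d1 * a
        + wW4 lam lam' lam'' γ₀ ee m0 m1 de d0 d1 := by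
  unfold wSD wW1 wW2 wW3 wW4
  simp only [zero_mul, add_zero]
  field_simp
  ring

theorem wW_zero (h0 : ee ≠ 0) (h1 : (1:ℝ) - ee ≠ 0) :
    wW1 lam lam' ee de * (ee * m1) + wW2 lam lam' ee de * ((1 - ee) * m0)
      + wW3 lam lam' lam'' γ₀ ee m0 m1 de d0 d1 * ee
      + wW4 lam lam' lam'' γ₀ ee m0 m1 de d0 d1 = 0 := by
  unfold wW1 wW2 wW3 wW4
  field_simp
  ring

theorem wS_bound (hM : 0 ≤ M) (hCb : 0 ≤ Cb)
    (hL : |lam (ee + r * de)| ≤ M) (hL' : |lam' (ee + r * de)| ≤ M)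
    (ha0 : 0 ≤ a) (ha1 : a ≤ 1)
    (her0 : 0 < ee + r * de) (her1 : ee + r * de < 1)
    (hB : (ee + r * de)⁻¹ ≤ B) (hB' : (1 - (ee + r * de))⁻¹ ≤ B)
    (hn0 : |m0 + r * d0| ≤ 3 * Cb) (hn1 : |m1 + r * d1| ≤ 3 * Cb) :
    |wS lam lam' γ₀ a y ee m0 m1 de d0 d1 r| ≤
      |γ₀| * (3 * M) + (M * (2 * B * (|y| + 3 * Cb) + 6 * Cb) + M * (6 * Cb) * 2) := by
  have hBe : 1 ≤ B * (ee + r * de) := by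
    have h := mul_le_mul_of_nonneg_right hB her0.le
    rwa [inv_mul_cancel₀ her0.ne'] at h
  have hq1 : |a / (ee + r * de)| ≤ B := by
    rw [abs_div, abs_of_pos her0, div_le_iff₀ her0]
    have : |a| = a := abs_of_nonneg ha0
    nlinarith [hBe]
  have hq2 : |(1 - a) / (1 - (ee + r * de))| ≤ B := by
    have h1e : (0:ℝ) < 1 - (ee + r * de) := by linarith
    have hBe' : 1 ≤ B * (1 - (ee + r * de)) := by
      have h := mul_le_mul_of_nonneg_right hB' h1e.le
      rwa [inv_mul_cancel₀ h1e.ne'] at h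
    rw [abs_div, abs_of_pos h1e, div_le_iff₀ h1e]
    have : |1 - a| = 1 - a := abs_of_nonneg (by linarith)
    nlinarith [hBe']
  set er := ee + r * de with her
  set n1 := m1 + r * d1 with hn1'
  set n0 := m0 + r * d0 with hn0'
  have ham : |a - er| ≤ 2 := by
    have h1 : |a| ≤ 1 := by rw [abs_of_nonneg ha0]; exact ha1
    have h2 : |er| ≤ 1 := by rw [abs_of_pos her0]; linarith
    calc |a - er| ≤ |a| + |er| := bsub
      _ ≤ 2 := by linarith
  have hy1 : |y - n1| ≤ |y| + 3 * Cb := le_trans bsub (by linarith)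
  have hy0 : |y - n0| ≤ |y| + 3 * Cb := le_trans bsub (by linarith)
  have hnd : |n1 - n0| ≤ 6 * Cb := le_trans bsub (by linarith)
  have hG : |γ₀ * (lam er + lam' er * (a - er))| ≤ |γ₀| * (3 * M) := by
    refine bnd le_rfl ?_
    have b2 : |lam' er * (a - er)| ≤ M * 2 := bnd hL' ham
    calc |lam er + lam' er * (a - er)| ≤ |lam er| + |lam' er * (a - er)| := abs_add_le _ _
      _ ≤ 3 * M := by linarith
  have hPhi : |(a / er) * (y - n1) - ((1 - a) / (1 - er)) * (y - n0) + (n1 - n0)|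
      ≤ 2 * B * (|y| + 3 * Cb) + 6 * Cb := by
    have b1 : |(a / er) * (y - n1)| ≤ B * (|y| + 3 * Cb) := bnd hq1 hy1
    have b2 : |((1 - a) / (1 - er)) * (y - n0)| ≤ B * (|y| + 3 * Cb) := bnd hq2 hy0
    calc |(a / er) * (y - n1) - ((1 - a) / (1 - er)) * (y - n0) + (n1 - n0)|
        ≤ |(a / er) * (y - n1) - ((1 - a) / (1 - er)) * (y - n0)| + |n1 - n0| := abs_add_le _ _
      _ ≤ (|(a / er) * (y - n1)| + |((1 - a) / (1 - er)) * (y - n0)|) + |n1 - n0| := by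
          have := bsub (x := (a / er) * (y - n1)) (z := ((1 - a) / (1 - er)) * (y - n0)); linarith
      _ ≤ 2 * B * (|y| + 3 * Cb) + 6 * Cb := by linarith
  have hT1 : |lam er * ((a / er) * (y - n1) - ((1 - a) / (1 - er)) * (y - n0) + (n1 - n0))|
      ≤ M * (2 * B * (|y| + 3 * Cb) + 6 * Cb) := bnd hL hPhi
  have hT2 : |lam' er * (n1 - n0) * (a - er)| ≤ M * (6 * Cb) * 2 := bnd (bnd hL' hnd) ham
  unfold wS
  rw [← her, ← hn1', ← hn0']
  have step1 := bsub (x := γ₀ * (lam er + lam' er * (a - er)))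
    (z := lam er * ((a / er) * (y - n1) - ((1 - a) / (1 - er)) * (y - n0) + (n1 - n0))
      + lam' er * (n1 - n0) * (a - er))
  have step2 := abs_add_le (lam er * ((a / er) * (y - n1) - ((1 - a) / (1 - er)) * (y - n0) + (n1 - n0)))
    (lam' er * (n1 - n0) * (a - er))
  linarith

theorem wW_bounds (hM : 0 ≤ M) (hCb : 0 ≤ Cb)
    (hL : |lam ee| ≤ M) (hL' : |lam' ee| ≤ M) (hL'' : |lam'' ee| ≤ M)
    (hee0 : 0 < ee) (hee1 : ee < 1)
    (hB : ee⁻¹ ≤ B) (hB' : (1 - ee)⁻¹ ≤ B)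
    (hde : |de| ≤ 1) (hm0 : |m0| ≤ Cb) (hm1 : |m1| ≤ Cb)
    (hd0 : |d0| ≤ 2 * Cb) (hd1 : |d1| ≤ 2 * Cb) :
    |wW1 lam lam' ee de| ≤ M * 1 * B ^ 2 + M * 1 * B ∧
    |wW2 lam lam' ee de| ≤ M * 1 * B + M * 1 * B ^ 2 ∧
    |wW3 lam lam' lam'' γ₀ ee m0 m1 de d0 d1| ≤
      |γ₀| * M * 1 + (M * 1 * (Cb * B + Cb * B)
        + M * (Cb * B ^ 2 + 2 * Cb * B + Cb * B ^ 2 + 2 * Cb * B)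
        + M * 1 * (2 * Cb) + M * (4 * Cb)) ∧
    |wW4 lam lam' lam'' γ₀ ee m0 m1 de d0 d1| ≤
      |γ₀| * M * 1 * 1 + (M * 1 * (Cb * B + 2 * Cb)
        + M * (Cb * B ^ 2 + 2 * Cb * B + 4 * Cb)
        + 1 * (M * 1 * (2 * Cb) + M * (4 * Cb)) + M * (2 * Cb) * 1) := by
  have h1e : (0:ℝ) < 1 - ee := by linarith
  have hBinv : |ee⁻¹| ≤ B := by rw [abs_of_pos (inv_pos.2 hee0)]; exact hB
  have hBinv' : |(1 - ee)⁻¹| ≤ B := by rw [abs_of_pos (inv_pos.2 h1e)]; exact hB'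
  have hB0 : 0 ≤ B := (abs_nonneg _).trans hBinv
  have hBinv2 : |(ee ^ 2)⁻¹| ≤ B ^ 2 := by
    rw [← inv_pow, abs_pow]
    exact pow_le_pow_left₀ (abs_nonneg _) hBinv 2
  have hBinv2' : |((1 - ee) ^ 2)⁻¹| ≤ B ^ 2 := by
    rw [← inv_pow, abs_pow]
    exact pow_le_pow_left₀ (abs_nonneg _) hBinv' 2
  have d1e : ∀ {x c : ℝ}, |x| ≤ c → |x / ee| ≤ c * B := by
    intro x c hx; rw [div_eq_mul_inv]; exact bnd hx hBinv
  have d1e' : ∀ {x c : ℝ}, |x| ≤ c → |x / (1 - ee)| ≤ c * B := by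
    intro x c hx; rw [div_eq_mul_inv]; exact bnd hx hBinv'
  have d2e : ∀ {x c : ℝ}, |x| ≤ c → |x / ee ^ 2| ≤ c * B ^ 2 := by
    intro x c hx; rw [div_eq_mul_inv]; exact bnd hx hBinv2
  have d2e' : ∀ {x c : ℝ}, |x| ≤ c → |x / (1 - ee) ^ 2| ≤ c * B ^ 2 := by
    intro x c hx; rw [div_eq_mul_inv]; exact bnd hx hBinv2'
  have heabs : |ee| ≤ 1 := by rw [abs_of_pos hee0]; linarith
  have hmm : |m1 - m0| ≤ 2 * Cb := le_trans bsub (by linarith)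
  have hdd : |d1 - d0| ≤ 4 * Cb := le_trans bsub (by linarith)
  refine ⟨?_, ?_, ?_, ?_⟩
  · have b1 : |lam ee * de / ee ^ 2| ≤ M * 1 * B ^ 2 := d2e (bnd hL hde)
    have b2 : |lam' ee * de / ee| ≤ M * 1 * B := d1e (bnd hL' hde)
    unfold wW1
    linarith [bsub (x := lam ee * de / ee ^ 2) (z := lam' ee * de / ee)]
  · have b1 : |lam' ee * de / (1 - ee)| ≤ M * 1 * B := d1e' (bnd hL' hde)
    have b2 : |lam ee * de / (1 - ee) ^ 2| ≤ M * 1 * B ^ 2 := d2e' (bnd hL hde)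
    unfold wW2
    linarith [abs_add_le (lam' ee * de / (1 - ee)) (lam ee * de / (1 - ee) ^ 2)]
  · have t1 : |γ₀ * lam'' ee * de| ≤ |γ₀| * M * 1 := bnd (bnd le_rfl hL'') hde
    have inner2 : |(-(m1 / ee) - m0 / (1 - ee))| ≤ Cb * B + Cb * B := by
      have h1 : |(-(m1 / ee))| ≤ Cb * B := by rw [abs_neg]; exact d1e hm1
      have h2 : |m0 / (1 - ee)| ≤ Cb * B := d1e' hm0
      linarith [bsub (x := -(m1 / ee)) (z := m0 / (1 - ee))]
    have t2 : |lam' ee * de * (-(m1 / ee) - m0 / (1 - ee))| ≤ M * 1 * (Cb * B + Cb * B) :=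
      bnd (bnd hL' hde) inner2
    have hdem1 : |de * m1| ≤ Cb := by have := bnd hde hm1; linarith
    have hdem0 : |de * m0| ≤ Cb := by have := bnd hde hm0; linarith
    have inner3 : |de * m1 / ee ^ 2 - d1 / ee - de * m0 / (1 - ee) ^ 2 - d0 / (1 - ee)|
        ≤ Cb * B ^ 2 + 2 * Cb * B + Cb * B ^ 2 + 2 * Cb * B := by
      have h1 : |de * m1 / ee ^ 2| ≤ Cb * B ^ 2 := d2e hdem1
      have h2 : |d1 / ee| ≤ (2 * Cb) * B := d1e hd1
      have h3 : |de * m0 / (1 - ee) ^ 2| ≤ Cb * B ^ 2 := d2e' hdem0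
      have h4 : |d0 / (1 - ee)| ≤ (2 * Cb) * B := d1e' hd0
      have s1 := bsub (x := de * m1 / ee ^ 2) (z := d1 / ee)
      have s2 := bsub (x := de * m1 / ee ^ 2 - d1 / ee) (z := de * m0 / (1 - ee) ^ 2)
      have s3 := bsub (x := de * m1 / ee ^ 2 - d1 / ee - de * m0 / (1 - ee) ^ 2) (z := d0 / (1 - ee))
      nlinarith [hB0, hCb]
    have t3 : |lam ee * (de * m1 / ee ^ 2 - d1 / ee - de * m0 / (1 - ee) ^ 2 - d0 / (1 - ee))|
        ≤ M * (Cb * B ^ 2 + 2 * Cb * B + Cb * B ^ 2 + 2 * Cb * B) := bnd hL inner3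
    have t4 : |lam'' ee * de * (m1 - m0)| ≤ M * 1 * (2 * Cb) := bnd (bnd hL'' hde) hmm
    have t5 : |lam' ee * (d1 - d0)| ≤ M * (4 * Cb) := bnd hL' hdd
    unfold wW3
    have s1 := bsub (x := γ₀ * lam'' ee * de)
      (z := lam' ee * de * (-(m1 / ee) - m0 / (1 - ee))
        + lam ee * (de * m1 / ee ^ 2 - d1 / ee - de * m0 / (1 - ee) ^ 2 - d0 / (1 - ee))
        + lam'' ee * de * (m1 - m0) + lam' ee * (d1 - d0))
    have s2 := abs_add_le (lam' ee * de * (-(m1 / ee) - m0 / (1 - ee))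
        + lam ee * (de * m1 / ee ^ 2 - d1 / ee - de * m0 / (1 - ee) ^ 2 - d0 / (1 - ee))
        + lam'' ee * de * (m1 - m0)) (lam' ee * (d1 - d0))
    have s3 := abs_add_le (lam' ee * de * (-(m1 / ee) - m0 / (1 - ee))
        + lam ee * (de * m1 / ee ^ 2 - d1 / ee - de * m0 / (1 - ee) ^ 2 - d0 / (1 - ee)))
        (lam'' ee * de * (m1 - m0))
    have s4 := abs_add_le (lam' ee * de * (-(m1 / ee) - m0 / (1 - ee)))
        (lam ee * (de * m1 / ee ^ 2 - d1 / ee - de * m0 / (1 - ee) ^ 2 - d0 / (1 - ee)))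
    linarith
  · have t0 : |(-(γ₀ * lam'' ee * de * ee))| ≤ |γ₀| * M * 1 * 1 := by
      rw [abs_neg]; exact bnd (bnd (bnd le_rfl hL'') hde) heabs
    have hdem0 : |de * m0| ≤ Cb := by have := bnd hde hm0; linarith
    have inner1 : |m0 / (1 - ee) + m1 - m0| ≤ Cb * B + 2 * Cb := by
      have h1 : |m0 / (1 - ee)| ≤ Cb * B := d1e' hm0
      have s1 := abs_add_le (m0 / (1 - ee)) m1
      have s2 := bsub (x := m0 / (1 - ee) + m1) (z := m0)
      linarith
    have t1 : |lam' ee * de * (m0 / (1 - ee) + m1 - m0)| ≤ M * 1 * (Cb * B + 2 * Cb) :=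
      bnd (bnd hL' hde) inner1
    have inner2 : |de * m0 / (1 - ee) ^ 2 + d0 / (1 - ee) + d1 - d0|
        ≤ Cb * B ^ 2 + 2 * Cb * B + 4 * Cb := by
      have h1 : |de * m0 / (1 - ee) ^ 2| ≤ Cb * B ^ 2 := d2e' hdem0
      have h2 : |d0 / (1 - ee)| ≤ (2 * Cb) * B := d1e' hd0
      have s1 := abs_add_le (de * m0 / (1 - ee) ^ 2) (d0 / (1 - ee))
      have s2 := abs_add_le (de * m0 / (1 - ee) ^ 2 + d0 / (1 - ee)) d1
      have s3 := bsub (x := de * m0 / (1 - ee) ^ 2 + d0 / (1 - ee) + d1) (z := d0)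
      nlinarith [hB0, hCb]
    have t2 : |lam ee * (de * m0 / (1 - ee) ^ 2 + d0 / (1 - ee) + d1 - d0)|
        ≤ M * (Cb * B ^ 2 + 2 * Cb * B + 4 * Cb) := bnd hL inner2
    have t3 : |ee * (lam'' ee * de * (m1 - m0) + lam' ee * (d1 - d0))|
        ≤ 1 * (M * 1 * (2 * Cb) + M * (4 * Cb)) := by
      refine bnd heabs ?_
      have h1 : |lam'' ee * de * (m1 - m0)| ≤ M * 1 * (2 * Cb) := bnd (bnd hL'' hde) hmm
      have h2 : |lam' ee * (d1 - d0)| ≤ M * (4 * Cb) := bnd hL' hdd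
      linarith [abs_add_le (lam'' ee * de * (m1 - m0)) (lam' ee * (d1 - d0))]
    have t4 : |lam' ee * (m1 - m0) * de| ≤ M * (2 * Cb) * 1 := bnd (bnd hL' hmm) hde
    unfold wW4
    have s1 := bsub (x := -(γ₀ * lam'' ee * de * ee))
      (z := lam' ee * de * (m0 / (1 - ee) + m1 - m0)
        + lam ee * (de * m0 / (1 - ee) ^ 2 + d0 / (1 - ee) + d1 - d0)
        - ee * (lam'' ee * de * (m1 - m0) + lam' ee * (d1 - d0))
        - lam' ee * (m1 - m0) * de)
    have s2 := bsub (x := lam' ee * de * (m0 / (1 - ee) + m1 - m0)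
        + lam ee * (de * m0 / (1 - ee) ^ 2 + d0 / (1 - ee) + d1 - d0)
        - ee * (lam'' ee * de * (m1 - m0) + lam' ee * (d1 - d0)))
        (z := lam' ee * (m1 - m0) * de)
    have s3 := bsub (x := lam' ee * de * (m0 / (1 - ee) + m1 - m0)
        + lam ee * (de * m0 / (1 - ee) ^ 2 + d0 / (1 - ee) + d1 - d0))
        (z := ee * (lam'' ee * de * (m1 - m0) + lam' ee * (d1 - d0)))
    have s4 := abs_add_le (lam' ee * de * (m0 / (1 - ee) + m1 - m0))
        (lam ee * (de * m0 / (1 - ee) ^ 2 + d0 / (1 - ee) + d1 - d0))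
    linarith
end RB

theorem pull_out {Ω : Type*} [F : MeasurableSpace Ω] {μ : Measure Ω} [IsProbabilityMeasure μ]
    {mX : MeasurableSpace Ω} (hmX : mX ≤ F) {W X ξ : Ω → ℝ} {c : ℝ}
    (hW : StronglyMeasurable[mX] W) (hWb : ∀ᵐ ω ∂μ, ‖W ω‖ ≤ c)
    (hX : Integrable X μ) (hξ : μ[X|mX] =ᵐ[μ] ξ) :
    ∫ ω, W ω * X ω ∂μ = ∫ ω, W ω * ξ ω ∂μ := by
  haveI : IsFiniteMeasure (μ.trim hmX) := isFiniteMeasure_trim hmX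
  have h1 : μ[W * X|mX] =ᵐ[μ] W * μ[X|mX] :=
    condExp_stronglyMeasurable_mul_of_bound hmX hW hX c hWb
  have h2 : ∫ ω, (W * X) ω ∂μ = ∫ ω, (μ[W * X|mX]) ω ∂μ := (integral_condExp hmX).symm
  have h3 : (μ[W * X|mX]) =ᵐ[μ] fun ω => W ω * ξ ω := by
    refine h1.trans ?_
    filter_upwards [hξ] with ω hω
    simp [hω]
  calc ∫ ω, W ω * X ω ∂μ = ∫ ω, (μ[W * X|mX]) ω ∂μ := h2
    _ = ∫ ω, W ω * ξ ω ∂μ := integral_congr_ae h3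

/-- Neyman orthogonality of the WATE score (first-order Gateaux
derivative): along the linear perturbation path `e_r = e + r(ẽ − e)`,
`μ_{a,r} = μ_a + r(μ̃_a − μ_a)`, the map `r ↦ E[L_r]` is differentiable at `r = 0`
(within `[0,1]`) with derivative equal to `0`. -/
theorem wate_score_neyman_orthogonality
    {Ω : Type*} {mX : MeasurableSpace Ω} [F : MeasurableSpace Ω] {μ : Measure Ω} [IsProbabilityMeasure μ]
    (hmX : mX ≤ F)
    {A Y e μ0 μ1 : Ω → ℝ}
    (hA : Measurable A) (hY : Measurable Y)
    (hAbin : ∀ᵐ ω ∂μ, A ω = 0 ∨ A ω = 1)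
    (he : Measurable[mX] e) (hμ0m : Measurable[mX] μ0) (hμ1m : Measurable[mX] μ1)
    (hcA : μ[A|mX] =ᵐ[μ] e)
    (hcAY1 : μ[(fun ω => A ω * Y ω)|mX] =ᵐ[μ] (fun ω => e ω * μ1 ω))
    (hcAY0 : μ[(fun ω => (1 - A ω) * Y ω)|mX] =ᵐ[μ] (fun ω => (1 - e ω) * μ0 ω))
    {δ : ℝ} (hδ0 : 0 < δ) (hδhalf : δ < 1 / 2)
    (heδ : ∀ᵐ ω ∂μ, e ω ∈ Set.Icc δ (1 - δ))
    {et μt0 μt1 : Ω → ℝ}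
    (het : Measurable[mX] et) (hμt0 : Measurable[mX] μt0) (hμt1 : Measurable[mX] μt1)
    (hetδ : ∀ᵐ ω ∂μ, et ω ∈ Set.Icc δ (1 - δ))
    {Cb : ℝ}
    (hbdd : ∀ᵐ ω ∂μ, |μ0 ω| ≤ Cb ∧ |μ1 ω| ≤ Cb ∧ |μt0 ω| ≤ Cb ∧ |μt1 ω| ≤ Cb)
    (hY2 : MemLp Y 2 μ)
    {lam lam' lam'' : ℝ → ℝ}
    (hlam1 : ∀ t, HasDerivAt lam (lam' t) t)
    (hlam2 : ∀ t, HasDerivAt lam' (lam'' t) t)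
    (hlam2c : Continuous lam'')
    {M : ℝ}
    (hbound : ∀ t ∈ Set.Icc (0 : ℝ) 1, |lam t| ≤ M ∧ |lam' t| ≤ M ∧ |lam'' t| ≤ M)
    (γ₀ : ℝ) :
    HasDerivWithinAt
      (fun r => ∫ ω,
        (γ₀ * (lam (e ω + r * (et ω - e ω))
            + lam' (e ω + r * (et ω - e ω)) * (A ω - (e ω + r * (et ω - e ω))))
          - (lam (e ω + r * (et ω - e ω))
              * ((A ω / (e ω + r * (et ω - e ω)))
                    * (Y ω - (μ1 ω + r * (μt1 ω - μ1 ω)))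
                - ((1 - A ω) / (1 - (e ω + r * (et ω - e ω))))
                    * (Y ω - (μ0 ω + r * (μt0 ω - μ0 ω)))
                + ((μ1 ω + r * (μt1 ω - μ1 ω)) - (μ0 ω + r * (μt0 ω - μ0 ω))))
            + lam' (e ω + r * (et ω - e ω))
                * ((μ1 ω + r * (μt1 ω - μ1 ω)) - (μ0 ω + r * (μt0 ω - μ0 ω)))
                * (A ω - (e ω + r * (et ω - e ω))))) ∂μ)
      0 (Set.Icc (0 : ℝ) 1) 0 := by
  classical
  letI : MeasurableSpace Ω := F
  haveI : (MeasureTheory.ae μ).NeBot := ae_neBot.2 (IsProbabilityMeasure.ne_zero μ)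
  have hYint : Integrable Y μ := hY2.integrable (by norm_num)
  have hM0 : 0 ≤ M := (abs_nonneg _).trans (hbound 0 ⟨le_rfl, by norm_num⟩).1
  have hCb0 : 0 ≤ Cb := by
    obtain ⟨ω, h⟩ := hbdd.exists
    exact (abs_nonneg _).trans h.1
  have hδ1 : δ < 1 := by linarith
  have hlamc : Continuous lam := by
    rw [continuous_iff_continuousAt]; intro t; exact (hlam1 t).continuousAt
  have hlampc : Continuous lam' := by
    rw [continuous_iff_continuousAt]; intro t; exact (hlam2 t).continuousAt
  have hmlam : Measurable lam := hlamc.measurable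
  have hmlamp : Measurable lam' := hlampc.measurable
  have hmlampp : Measurable lam'' := hlam2c.measurable
  have hAF : Measurable[F] A := hA
  have hYF : Measurable[F] Y := hY
  have heF : Measurable[F] e := he.mono hmX le_rfl
  have hμ0F : Measurable[F] μ0 := hμ0m.mono hmX le_rfl
  have hμ1F : Measurable[F] μ1 := hμ1m.mono hmX le_rfl
  have hetF : Measurable[F] et := het.mono hmX le_rfl
  have hμt0F : Measurable[F] μt0 := hμt0.mono hmX le_rfl
  have hμt1F : Measurable[F] μt1 := hμt1.mono hmX le_rfl
  set B : ℝ := (δ / 2)⁻¹ with hBdef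
  have hmeasS : ∀ r : ℝ, Measurable[F] (fun ω => wS lam lam' γ₀ (A ω) (Y ω) (e ω) (μ0 ω) (μ1 ω)
      (et ω - e ω) (μt0 ω - μ0 ω) (μt1 ω - μ1 ω) r) := by
    intro r; unfold wS; fun_prop
  have hmeasSD : Measurable[F] (fun ω => wSD lam lam' lam'' γ₀ (A ω) (Y ω) (e ω) (μ0 ω) (μ1 ω)
      (et ω - e ω) (μt0 ω - μ0 ω) (μt1 ω - μ1 ω) 0) := by
    unfold wSD; fun_prop
  have hfact : ∀ ω, e ω ∈ Set.Icc δ (1 - δ) → et ω ∈ Set.Icc δ (1 - δ) →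
      ∀ r : ℝ, |r| < δ ^ 2 →
      0 < e ω + r * (et ω - e ω) ∧ e ω + r * (et ω - e ω) < 1 ∧
      (e ω + r * (et ω - e ω))⁻¹ ≤ B ∧ (1 - (e ω + r * (et ω - e ω)))⁻¹ ≤ B ∧
      (0:ℝ) ≤ e ω + r * (et ω - e ω) ∧ e ω + r * (et ω - e ω) ≤ 1 ∧ |et ω - e ω| ≤ 1 := by
    intro ω h1 h2 r hr
    obtain ⟨he1, he2⟩ := h1
    obtain ⟨ht1, ht2⟩ := h2
    have hde : |et ω - e ω| ≤ 1 := abs_le.mpr ⟨by linarith, by linarith⟩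
    have hrde : |r * (et ω - e ω)| ≤ δ ^ 2 := by
      rw [abs_mul]
      calc |r| * |et ω - e ω| ≤ δ ^ 2 * 1 :=
            mul_le_mul hr.le hde (abs_nonneg _) (by positivity)
        _ = δ ^ 2 := by ring
    obtain ⟨hl, hu⟩ := abs_le.mp hrde
    have hq : δ ^ 2 ≤ δ / 2 := by nlinarith
    have her0 : δ / 2 ≤ e ω + r * (et ω - e ω) := by linarith
    have her1 : e ω + r * (et ω - e ω) ≤ 1 - δ / 2 := by linarith
    have hp : (0:ℝ) < δ / 2 := by linarith
    refine ⟨by linarith, by linarith, ?_, ?_, by linarith, by linarith, hde⟩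
    · rw [hBdef]; exact inv_anti₀ hp her0
    · rw [hBdef]; exact inv_anti₀ hp (by linarith)
  have hnfact : ∀ (m d : ℝ), |m| ≤ Cb → |d| ≤ 2 * Cb → ∀ r : ℝ, |r| < δ ^ 2 →
      |m + r * d| ≤ 3 * Cb := by
    intro m d hm hd r hr
    have hr1 : |r| ≤ 1 := by nlinarith [abs_nonneg r]
    have h1 : |r * d| ≤ 2 * Cb := by
      rw [abs_mul]
      calc |r| * |d| ≤ 1 * (2 * Cb) := mul_le_mul hr1 hd (abs_nonneg _) (by norm_num)
        _ = 2 * Cb := by ring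
    calc |m + r * d| ≤ |m| + |r * d| := abs_add_le _ _
      _ ≤ 3 * Cb := by linarith
  have ε_pos : (0:ℝ) < δ ^ 2 := by positivity
  set bdd : Ω → ℝ := fun ω => |γ₀| * (4 * M) + (M * (2 * B * (|Y ω| + 3 * Cb) + 6 * Cb)
    + M * (2 * (B ^ 2 * (|Y ω| + 3 * Cb)) + 2 * (B * (2 * Cb)) + 4 * Cb) + 26 * M * Cb)
    with hbdddef
  have hbddint : Integrable bdd μ := by
    have hh : bdd = fun ω => (|γ₀| * (4 * M) + (M * (2 * B * 3 * Cb + 6 * Cb)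
        + M * (2 * (B ^ 2 * (3 * Cb)) + 2 * (B * (2 * Cb)) + 4 * Cb) + 26 * M * Cb))
        + (M * (2 * B) + M * (2 * B ^ 2)) * |Y ω| := by
      funext ω; rw [hbdddef]; ring
    rw [hh]
    exact (integrable_const _).add (hYint.abs.const_mul _)
  have h_bound : ∀ᵐ ω ∂μ, ∀ r ∈ Metric.ball (0:ℝ) (δ ^ 2),
      ‖wSD lam lam' lam'' γ₀ (A ω) (Y ω) (e ω) (μ0 ω) (μ1 ω)
        (et ω - e ω) (μt0 ω - μ0 ω) (μt1 ω - μ1 ω) r‖ ≤ bdd ω := by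
    filter_upwards [heδ, hetδ, hbdd, hAbin] with ω h1 h2 h3 h4
    intro r hrball
    have hr : |r| < δ ^ 2 := by
      simpa [Real.dist_eq] using hrball
    obtain ⟨p1, p2, p3, p4, p5, p6, p7⟩ := hfact ω h1 h2 r hr
    obtain ⟨q1, q2, q3⟩ := hbound _ (⟨p5, p6⟩ : _ ∈ Set.Icc (0:ℝ) 1)
    have ha0 : 0 ≤ A ω := by rcases h4 with h | h <;> simp [h]
    have ha1 : A ω ≤ 1 := by rcases h4 with h | h <;> simp [h]
    have hd0b : |μt0 ω - μ0 ω| ≤ 2 * Cb := le_trans bsub (by linarith [h3.1, h3.2.2.1])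
    have hd1b : |μt1 ω - μ1 ω| ≤ 2 * Cb := le_trans bsub (by linarith [h3.2.1, h3.2.2.2])
    have hn0 := hnfact (μ0 ω) (μt0 ω - μ0 ω) h3.1 hd0b r hr
    have hn1 := hnfact (μ1 ω) (μt1 ω - μ1 ω) h3.2.1 hd1b r hr
    rw [Real.norm_eq_abs, hbdddef]
    exact wSD_bound hM0 hCb0 q1 q2 q3 ha0 ha1 p1 p2 p3 p4 p7 hd0b hd1b hn0 hn1
  have h_diff : ∀ᵐ ω ∂μ, ∀ r ∈ Metric.ball (0:ℝ) (δ ^ 2),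
      HasDerivAt (fun s => wS lam lam' γ₀ (A ω) (Y ω) (e ω) (μ0 ω) (μ1 ω)
          (et ω - e ω) (μt0 ω - μ0 ω) (μt1 ω - μ1 ω) s)
        (wSD lam lam' lam'' γ₀ (A ω) (Y ω) (e ω) (μ0 ω) (μ1 ω)
          (et ω - e ω) (μt0 ω - μ0 ω) (μt1 ω - μ1 ω) r) r := by
    filter_upwards [heδ, hetδ] with ω h1 h2
    intro r hrball
    have hr : |r| < δ ^ 2 := by
      simpa [Real.dist_eq] using hrball
    obtain ⟨p1, p2, _, _, _, _, _⟩ := hfact ω h1 h2 r hr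
    exact wS_hasDerivAt hlam1 hlam2 _ _ _ _ _ _ _ _ _ _ p1.ne' (by linarith)
  have hF_int : Integrable (fun ω => wS lam lam' γ₀ (A ω) (Y ω) (e ω) (μ0 ω) (μ1 ω)
      (et ω - e ω) (μt0 ω - μ0 ω) (μt1 ω - μ1 ω) 0) μ := by
    have hbint : Integrable (fun ω => (|γ₀| * (3 * M) + (M * (2 * B * 3 * Cb + 6 * Cb)
        + M * (6 * Cb) * 2)) + (M * (2 * B)) * |Y ω|) μ :=
      (integrable_const _).add (hYint.abs.const_mul _)
    refine Integrable.mono' hbint ((hmeasS 0).aestronglyMeasurable) ?_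
    filter_upwards [heδ, hetδ, hbdd, hAbin] with ω h1 h2 h3 h4
    have hr : |(0:ℝ)| < δ ^ 2 := by simpa using ε_pos
    obtain ⟨p1, p2, p3, p4, p5, p6, p7⟩ := hfact ω h1 h2 0 hr
    obtain ⟨q1, q2, _⟩ := hbound _ (⟨p5, p6⟩ : _ ∈ Set.Icc (0:ℝ) 1)
    have ha0 : 0 ≤ A ω := by rcases h4 with h | h <;> simp [h]
    have ha1 : A ω ≤ 1 := by rcases h4 with h | h <;> simp [h]
    have hd0b : |μt0 ω - μ0 ω| ≤ 2 * Cb := le_trans bsub (by linarith [h3.1, h3.2.2.1])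
    have hd1b : |μt1 ω - μ1 ω| ≤ 2 * Cb := le_trans bsub (by linarith [h3.2.1, h3.2.2.2])
    have hn0 := hnfact (μ0 ω) (μt0 ω - μ0 ω) h3.1 hd0b 0 hr
    have hn1 := hnfact (μ1 ω) (μt1 ω - μ1 ω) h3.2.1 hd1b 0 hr
    rw [Real.norm_eq_abs]
    calc |wS lam lam' γ₀ (A ω) (Y ω) (e ω) (μ0 ω) (μ1 ω)
          (et ω - e ω) (μt0 ω - μ0 ω) (μt1 ω - μ1 ω) 0|
        ≤ |γ₀| * (3 * M) + (M * (2 * B * (|Y ω| + 3 * Cb) + 6 * Cb) + M * (6 * Cb) * 2) :=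
          wS_bound hM0 hCb0 q1 q2 ha0 ha1 p1 p2 p3 p4 hn0 hn1
      _ = (|γ₀| * (3 * M) + (M * (2 * B * 3 * Cb + 6 * Cb) + M * (6 * Cb) * 2))
          + (M * (2 * B)) * |Y ω| := by ring
  have key := hasDerivAt_integral_of_dominated_loc_of_deriv_le (μ := μ)
    (F := fun r ω => wS lam lam' γ₀ (A ω) (Y ω) (e ω) (μ0 ω) (μ1 ω)
      (et ω - e ω) (μt0 ω - μ0 ω) (μt1 ω - μ1 ω) r)
    (F' := fun r ω => wSD lam lam' lam'' γ₀ (A ω) (Y ω) (e ω) (μ0 ω) (μ1 ω)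
      (et ω - e ω) (μt0 ω - μ0 ω) (μt1 ω - μ1 ω) r)
    (x₀ := 0) (bound := bdd) (Metric.ball_mem_nhds 0 ε_pos)
    (Filter.Eventually.of_forall fun r => (hmeasS r).aestronglyMeasurable)
    hF_int hmeasSD.aestronglyMeasurable h_bound hbddint h_diff
  obtain ⟨hint0, hderiv0⟩ := key
  have hderiv : HasDerivAt (fun r => ∫ ω, wS lam lam' γ₀ (A ω) (Y ω) (e ω) (μ0 ω) (μ1 ω)
      (et ω - e ω) (μt0 ω - μ0 ω) (μt1 ω - μ1 ω) r ∂μ)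
      (∫ ω, wSD lam lam' lam'' γ₀ (A ω) (Y ω) (e ω) (μ0 ω) (μ1 ω)
        (et ω - e ω) (μt0 ω - μ0 ω) (μt1 ω - μ1 ω) 0 ∂μ) 0 := hderiv0
  -- Now show the derivative integral vanishes.
  set W1f : Ω → ℝ := fun ω => wW1 lam lam' (e ω) (et ω - e ω) with hW1def
  set W2f : Ω → ℝ := fun ω => wW2 lam lam' (e ω) (et ω - e ω) with hW2def
  set W3f : Ω → ℝ := fun ω => wW3 lam lam' lam'' γ₀ (e ω) (μ0 ω) (μ1 ω)
    (et ω - e ω) (μt0 ω - μ0 ω) (μt1 ω - μ1 ω) with hW3def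
  set W4f : Ω → ℝ := fun ω => wW4 lam lam' lam'' γ₀ (e ω) (μ0 ω) (μ1 ω)
    (et ω - e ω) (μt0 ω - μ0 ω) (μt1 ω - μ1 ω) with hW4def
  have hW1m : Measurable[mX] W1f := by rw [hW1def]; unfold wW1; fun_prop
  have hW2m : Measurable[mX] W2f := by rw [hW2def]; unfold wW2; fun_prop
  have hW3m : Measurable[mX] W3f := by rw [hW3def]; unfold wW3; fun_prop
  have hW4m : Measurable[mX] W4f := by rw [hW4def]; unfold wW4; fun_prop
  set c1 : ℝ := M * 1 * B ^ 2 + M * 1 * B with hc1def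
  set c2 : ℝ := M * 1 * B + M * 1 * B ^ 2 with hc2def
  set c3 : ℝ := |γ₀| * M * 1 + (M * 1 * (Cb * B + Cb * B)
    + M * (Cb * B ^ 2 + 2 * Cb * B + Cb * B ^ 2 + 2 * Cb * B)
    + M * 1 * (2 * Cb) + M * (4 * Cb)) with hc3def
  set c4 : ℝ := |γ₀| * M * 1 * 1 + (M * 1 * (Cb * B + 2 * Cb)
    + M * (Cb * B ^ 2 + 2 * Cb * B + 4 * Cb)
    + 1 * (M * 1 * (2 * Cb) + M * (4 * Cb)) + M * (2 * Cb) * 1) with hc4def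
  have hWb : ∀ᵐ ω ∂μ, |W1f ω| ≤ c1 ∧ |W2f ω| ≤ c2 ∧ |W3f ω| ≤ c3 ∧ |W4f ω| ≤ c4 := by
    filter_upwards [heδ, hetδ, hbdd] with ω h1 h2 h3
    have hee0 : 0 < e ω := lt_of_lt_of_le hδ0 h1.1
    have hee1 : e ω < 1 := lt_of_le_of_lt h1.2 (by linarith)
    have hBe : (e ω)⁻¹ ≤ B := by
      rw [hBdef]; exact inv_anti₀ (by linarith) (by linarith [h1.1])
    have hBe' : (1 - e ω)⁻¹ ≤ B := by
      rw [hBdef]; exact inv_anti₀ (by linarith) (by linarith [h1.2])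
    have hde : |et ω - e ω| ≤ 1 := abs_le.mpr
      ⟨by linarith [h2.1, h1.2], by linarith [h2.2, h1.1]⟩
    obtain ⟨q1, q2, q3⟩ := hbound (e ω) ⟨hee0.le, hee1.le⟩
    have hd0b : |μt0 ω - μ0 ω| ≤ 2 * Cb := le_trans bsub (by linarith [h3.1, h3.2.2.1])
    have hd1b : |μt1 ω - μ1 ω| ≤ 2 * Cb := le_trans bsub (by linarith [h3.2.1, h3.2.2.2])
    exact wW_bounds hM0 hCb0 q1 q2 q3 hee0 hee1 hBe hBe' hde h3.1 h3.2.1 hd0b hd1b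
  have hW1b : ∀ᵐ ω ∂μ, ‖W1f ω‖ ≤ c1 := by
    filter_upwards [hWb] with ω h; rw [Real.norm_eq_abs]; exact h.1
  have hW2b : ∀ᵐ ω ∂μ, ‖W2f ω‖ ≤ c2 := by
    filter_upwards [hWb] with ω h; rw [Real.norm_eq_abs]; exact h.2.1
  have hW3b : ∀ᵐ ω ∂μ, ‖W3f ω‖ ≤ c3 := by
    filter_upwards [hWb] with ω h; rw [Real.norm_eq_abs]; exact h.2.2.1
  have hW4b : ∀ᵐ ω ∂μ, ‖W4f ω‖ ≤ c4 := by
    filter_upwards [hWb] with ω h; rw [Real.norm_eq_abs]; exact h.2.2.2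
  have hW1F : AEStronglyMeasurable W1f μ := (hW1m.mono hmX le_rfl).aestronglyMeasurable
  have hW2F : AEStronglyMeasurable W2f μ := (hW2m.mono hmX le_rfl).aestronglyMeasurable
  have hW3F : AEStronglyMeasurable W3f μ := (hW3m.mono hmX le_rfl).aestronglyMeasurable
  have hW4F : AEStronglyMeasurable W4f μ := (hW4m.mono hmX le_rfl).aestronglyMeasurable
  have hA1 : ∀ᵐ ω ∂μ, ‖A ω‖ ≤ 1 := by
    filter_upwards [hAbin] with ω h; rcases h with h | h <;> simp [h]
  have h1A1 : ∀ᵐ ω ∂μ, ‖1 - A ω‖ ≤ 1 := by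
    filter_upwards [hAbin] with ω h; rcases h with h | h <;> simp [h]
  have hAY : Integrable (fun ω => A ω * Y ω) μ :=
    hYint.bdd_mul hAF.aestronglyMeasurable hA1
  have hA0Y : Integrable (fun ω => (1 - A ω) * Y ω) μ :=
    hYint.bdd_mul ((measurable_const.sub hAF).aestronglyMeasurable) h1A1
  have hAint : Integrable A μ :=
    Integrable.mono' (integrable_const 1) hAF.aestronglyMeasurable hA1
  have IW1 : Integrable (fun ω => W1f ω * (A ω * Y ω)) μ := hAY.bdd_mul hW1F hW1b
  have IW2 : Integrable (fun ω => W2f ω * ((1 - A ω) * Y ω)) μ := hA0Y.bdd_mul hW2F hW2b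
  have IW3 : Integrable (fun ω => W3f ω * A ω) μ := hAint.bdd_mul hW3F hW3b
  have IW4 : Integrable W4f μ := Integrable.mono' (integrable_const c4) hW4F hW4b
  have hne : ∀ ω, e ω ∈ Set.Icc δ (1 - δ) → e ω ≠ 0 ∧ (1:ℝ) - e ω ≠ 0 := by
    intro ω h1
    constructor
    · exact (lt_of_lt_of_le hδ0 h1.1).ne'
    · have : e ω ≤ 1 - δ := h1.2
      intro hc
      have : e ω = 1 := by linarith
      linarith
  have hdec : (fun ω => wSD lam lam' lam'' γ₀ (A ω) (Y ω) (e ω) (μ0 ω) (μ1 ω)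
      (et ω - e ω) (μt0 ω - μ0 ω) (μt1 ω - μ1 ω) 0)
      =ᵐ[μ] (fun ω => W1f ω * (A ω * Y ω) + W2f ω * ((1 - A ω) * Y ω)
        + W3f ω * A ω + W4f ω) := by
    filter_upwards [heδ] with ω h1
    obtain ⟨h0, h0'⟩ := hne ω h1
    exact wSD_zero_decomp h0 h0'
  have p1 : ∫ ω, W1f ω * (A ω * Y ω) ∂μ = ∫ ω, W1f ω * (e ω * μ1 ω) ∂μ :=
    pull_out hmX hW1m.stronglyMeasurable hW1b hAY hcAY1
  have p2 : ∫ ω, W2f ω * ((1 - A ω) * Y ω) ∂μ = ∫ ω, W2f ω * ((1 - e ω) * μ0 ω) ∂μ :=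
    pull_out hmX hW2m.stronglyMeasurable hW2b hA0Y hcAY0
  have p3 : ∫ ω, W3f ω * A ω ∂μ = ∫ ω, W3f ω * e ω ∂μ :=
    pull_out hmX hW3m.stronglyMeasurable hW3b hAint hcA
  -- integrability of the conditional-mean products
  have heabs : ∀ᵐ ω ∂μ, |e ω| ≤ 1 ∧ |1 - e ω| ≤ 1 := by
    filter_upwards [heδ] with ω h1
    constructor
    · rw [abs_of_nonneg (by linarith [h1.1] : (0:ℝ) ≤ e ω)]; linarith [h1.2]
    · rw [abs_of_nonneg (by linarith [h1.2] : (0:ℝ) ≤ 1 - e ω)]; linarith [h1.1]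
  have J1 : Integrable (fun ω => W1f ω * (e ω * μ1 ω)) μ := by
    refine Integrable.mono' (integrable_const (c1 * (1 * Cb))) (hW1F.mul ((heF.mul hμ1F).aestronglyMeasurable)) ?_
    filter_upwards [hWb, heabs, hbdd] with ω h1 h2 h3
    rw [Real.norm_eq_abs]
    exact bnd h1.1 (bnd h2.1 h3.2.1)
  have J2 : Integrable (fun ω => W2f ω * ((1 - e ω) * μ0 ω)) μ := by
    refine Integrable.mono' (integrable_const (c2 * (1 * Cb))) (hW2F.mul (((measurable_const.sub heF).mul hμ0F).aestronglyMeasurable)) ?_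
    filter_upwards [hWb, heabs, hbdd] with ω h1 h2 h3
    rw [Real.norm_eq_abs]
    exact bnd h1.2.1 (bnd h2.2 h3.1)
  have J3 : Integrable (fun ω => W3f ω * e ω) μ := by
    refine Integrable.mono' (integrable_const (c3 * 1)) (hW3F.mul heF.aestronglyMeasurable) ?_
    filter_upwards [hWb, heabs] with ω h1 h2
    rw [Real.norm_eq_abs]
    exact bnd h1.2.2.1 h2.1
  have hsum0 : ∫ ω, (W1f ω * (e ω * μ1 ω) + W2f ω * ((1 - e ω) * μ0 ω)
      + W3f ω * e ω + W4f ω) ∂μ = 0 := by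
    have hz : (fun ω => W1f ω * (e ω * μ1 ω) + W2f ω * ((1 - e ω) * μ0 ω)
        + W3f ω * e ω + W4f ω) =ᵐ[μ] (fun _ => (0:ℝ)) := by
      filter_upwards [heδ] with ω h1
      obtain ⟨h0, h0'⟩ := hne ω h1
      exact wW_zero h0 h0'
    rw [integral_congr_ae hz]
    simp
  have IW12 : Integrable (fun ω => W1f ω * (A ω * Y ω) + W2f ω * ((1 - A ω) * Y ω)) μ :=
    IW1.add IW2
  have IW123 : Integrable (fun ω => W1f ω * (A ω * Y ω) + W2f ω * ((1 - A ω) * Y ω)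
      + W3f ω * A ω) μ := IW12.add IW3
  have J12 : Integrable (fun ω => W1f ω * (e ω * μ1 ω) + W2f ω * ((1 - e ω) * μ0 ω)) μ :=
    J1.add J2
  have J123 : Integrable (fun ω => W1f ω * (e ω * μ1 ω) + W2f ω * ((1 - e ω) * μ0 ω)
      + W3f ω * e ω) μ := J12.add J3
  have hzero : ∫ ω, wSD lam lam' lam'' γ₀ (A ω) (Y ω) (e ω) (μ0 ω) (μ1 ω)
      (et ω - e ω) (μt0 ω - μ0 ω) (μt1 ω - μ1 ω) 0 ∂μ = 0 := by
    rw [integral_congr_ae hdec]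
    rw [integral_add IW123 IW4, integral_add IW12 IW3, integral_add IW1 IW2]
    rw [p1, p2, p3]
    rw [← integral_add J1 J2, ← integral_add J12 J3, ← integral_add J123 IW4]
    exact hsum0
  rw [hzero] at hderiv
  exact hderiv.hasDerivWithinAt
end

section
/- Second-order plug-in bias bound for the denominator: let ê be mX-measurable, let I ⊆ ℝ be an interval containing the essential ranges of both e and ê, and suppose λ : ℝ → ℝ is differentiable with λ′ L-Lipschitz on I. If D̂ = λ(ê) + λ′(ê)(A − ê) is integrable, then |E[D̂] − E[λ(e)]| ≤ L·E[(ê − e)²]. -/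
open MeasureTheory

/-- Pointwise second-order Taylor bound with Lipschitz derivative on an ord-connected set. -/
lemma taylor_lip_bound {I : Set ℝ} (hI : I.OrdConnected)
    {lam lam' : ℝ → ℝ} (hlam : ∀ t, HasDerivAt lam (lam' t) t)
    {L : ℝ} (hL : 0 ≤ L) (hLip : ∀ s ∈ I, ∀ t ∈ I, |lam' s - lam' t| ≤ L * |s - t|)
    {a b : ℝ} (ha : a ∈ I) (hb : b ∈ I) :
    |lam b - lam a - lam' a * (b - a)| ≤ L * (b - a) ^ 2 := by
  set s : Set ℝ := segment ℝ a b with hs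
  have hsub : s ⊆ I := by
    rw [hs, segment_eq_uIcc]
    exact hI.uIcc_subset ha hb
  have hconv : Convex ℝ s := convex_segment a b
  set g : ℝ → ℝ := fun t => lam t - lam' a * t with hg
  have hgderiv : ∀ x ∈ s, HasDerivWithinAt g (lam' x - lam' a) s x := by
    intro x _
    have : HasDerivAt g (lam' x - lam' a * 1) x :=
      (hlam x).sub ((hasDerivAt_id x).const_mul (lam' a))
    simpa using this.hasDerivWithinAt
  have hbound : ∀ x ∈ s, ‖lam' x - lam' a‖ ≤ L * |b - a| := by
    intro x hx
    have hxI : x ∈ I := hsub hx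
    have h1 : |lam' x - lam' a| ≤ L * |x - a| := hLip x hxI a ha
    have hxu : x ∈ Set.uIcc a b := by rwa [hs, segment_eq_uIcc] at hx
    have h2 : |x - a| ≤ |b - a| := by
      rcases Set.mem_uIcc.mp hxu with h | h
      · rw [abs_of_nonneg (by linarith [h.1]), abs_of_nonneg (by linarith [h.1, h.2])]
        linarith [h.2]
      · rw [abs_of_nonpos (by linarith [h.2]), abs_of_nonpos (by linarith [h.1, h.2])]
        linarith [h.1]
    calc ‖lam' x - lam' a‖ = |lam' x - lam' a| := rfl
      _ ≤ L * |x - a| := h1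
      _ ≤ L * |b - a| := by nlinarith
  have := hconv.norm_image_sub_le_of_norm_hasDerivWithin_le hgderiv hbound
    (left_mem_segment ℝ a b) (right_mem_segment ℝ a b)
  have hgba : g b - g a = lam b - lam a - lam' a * (b - a) := by rw [hg]; ring
  calc |lam b - lam a - lam' a * (b - a)| = ‖g b - g a‖ := by
        rw [hgba, Real.norm_eq_abs]
    _ ≤ L * |b - a| * ‖b - a‖ := this
    _ = L * (b - a) ^ 2 := by
        rw [Real.norm_eq_abs, mul_assoc, ← abs_mul, ← sq, abs_of_nonneg (sq_nonneg _)]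

/-- Second-order plug-in bias bound for the denominator: if `ê` is
`mX`-measurable, `I` is an interval containing the essential ranges of `e` and `ê`, `λ`
is differentiable with `λ′` `L`-Lipschitz on `I`, and `D̂ = λ(ê) + λ′(ê)(A − ê)` is
integrable, then `|E[D̂] − E[λ(e)]| ≤ L·E[(ê − e)²]`. -/
theorem denominator_plugin_bias_bound
    {Ω : Type*} {mX : MeasurableSpace Ω} [F : MeasurableSpace Ω] {μ : Measure Ω} [IsProbabilityMeasure μ]
    (hmX : mX ≤ F)
    {A e : Ω → ℝ}
    (hA : Measurable A)
    (hAbin : ∀ᵐ ω ∂μ, A ω = 0 ∨ A ω = 1)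
    (he : Measurable[mX] e)
    (he01 : ∀ᵐ ω ∂μ, 0 < e ω ∧ e ω < 1)
    (hcA : μ[A|mX] =ᵐ[μ] e)
    {eh : Ω → ℝ} (heh : Measurable[mX] eh)
    {I : Set ℝ} (hI : I.OrdConnected)
    (hrange : ∀ᵐ ω ∂μ, e ω ∈ I ∧ eh ω ∈ I)
    {lam lam' : ℝ → ℝ} (hlam : ∀ t, HasDerivAt lam (lam' t) t)
    {L : ℝ} (hL : 0 ≤ L)
    (hLip : ∀ s ∈ I, ∀ t ∈ I, |lam' s - lam' t| ≤ L * |s - t|)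
    (hDh : Integrable (fun ω => lam (eh ω) + lam' (eh ω) * (A ω - eh ω)) μ)
    (hlame : Integrable (fun ω => lam (e ω)) μ)
    (hsq : Integrable (fun ω => (eh ω - e ω) ^ 2) μ) :
    |(∫ ω, (lam (eh ω) + lam' (eh ω) * (A ω - eh ω)) ∂μ) - ∫ ω, lam (e ω) ∂μ|
      ≤ L * ∫ ω, (eh ω - e ω) ^ 2 ∂μ := by
  -- basic measurability
  have heF : Measurable[F] e := he.mono hmX le_rfl
  have hehF : Measurable[F] eh := heh.mono hmX le_rfl
  have hAF : Measurable[F] A := hA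
  have hlam'meas : Measurable lam' := by
    have : lam' = deriv lam := funext fun t => ((hlam t).deriv).symm
    rw [this]
    exact measurable_deriv lam
  have hlamcont : Continuous lam :=
    continuous_iff_continuousAt.mpr fun t => (hlam t).continuousAt
  -- the remainder R and the oracle term T
  set R : Ω → ℝ := fun ω => lam (e ω) - lam (eh ω) - lam' (eh ω) * (e ω - eh ω) with hRdef
  have hRmeas : Measurable[F] R := by
    apply Measurable.sub
    · exact (hlamcont.measurable.comp heF).sub (hlamcont.measurable.comp hehF)
    · exact (hlam'meas.comp hehF).mul (heF.sub hehF)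
  have hRbound : ∀ᵐ ω ∂μ, |R ω| ≤ L * (eh ω - e ω) ^ 2 := by
    filter_upwards [hrange] with ω ⟨heI, hehI⟩
    have := taylor_lip_bound hI hlam hL hLip hehI heI
    calc |R ω| ≤ L * (e ω - eh ω) ^ 2 := this
      _ = L * (eh ω - e ω) ^ 2 := by ring
  have hRint : Integrable R μ := by
    refine Integrable.mono' (hsq.const_mul L) (hRmeas.aestronglyMeasurable (μ := μ)) ?_
    filter_upwards [hRbound] with ω h
    simpa using h
  have hT : Integrable (fun ω => lam (eh ω) + lam' (eh ω) * (e ω - eh ω)) μ := by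
    have : (fun ω => lam (eh ω) + lam' (eh ω) * (e ω - eh ω))
        = fun ω => lam (e ω) - R ω := by
      funext ω; rw [hRdef]; ring
    rw [this]
    exact hlame.sub hRint
  -- the centered term f * (A - e) has integral zero
  set f : Ω → ℝ := fun ω => lam' (eh ω) with hfdef
  set g : Ω → ℝ := fun ω => A ω - e ω with hgdef
  have hgint : Integrable g μ := by
    refine Integrable.mono' (integrable_const 1) ((hAF.sub heF).aestronglyMeasurable (μ := μ)) ?_
    filter_upwards [hAbin, he01] with ω hab ⟨h0, h1⟩
    rcases hab with h | h <;> rw [hgdef] <;> simp [h] <;> rw [abs_le] <;> constructor <;> linarith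
  have heint : Integrable e μ := by
    refine Integrable.mono' (integrable_const 1) (heF.aestronglyMeasurable (μ := μ)) ?_
    filter_upwards [he01] with ω ⟨h0, h1⟩
    rw [Real.norm_eq_abs, abs_le]; constructor <;> linarith
  have hAint : Integrable A μ := by
    have : A = fun ω => g ω + e ω := by funext ω; rw [hgdef]; ring
    rw [this]; exact hgint.add heint
  have hfg_eq : f * g = fun ω =>
      (lam (eh ω) + lam' (eh ω) * (A ω - eh ω)) - (lam (eh ω) + lam' (eh ω) * (e ω - eh ω)) := by
    funext ω; simp [hfdef, hgdef]; ring
  have hfgint : Integrable (f * g) μ := by rw [hfg_eq]; exact hDh.sub hT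
  have hcg : μ[g|mX] =ᵐ[μ] 0 := by
    have h1 : μ[g|mX] =ᵐ[μ] μ[A|mX] - μ[e|mX] := condExp_sub hAint heint mX
    have h2 : μ[e|mX] = e := condExp_of_stronglyMeasurable hmX he.stronglyMeasurable heint
    filter_upwards [h1, hcA] with ω hω hωA
    simp only [Pi.sub_apply, Pi.zero_apply] at *
    rw [hω, h2, hωA]; ring
  have hpull : μ[f * g|mX] =ᵐ[μ] f * μ[g|mX] :=
    condExp_mul_of_stronglyMeasurable_left ((hlam'meas.comp heh).stronglyMeasurable) hfgint hgint
  have hzero : ∫ ω, (f * g) ω ∂μ = 0 := by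
    rw [← integral_condExp hmX (f := f * g) (μ := μ)]
    have : μ[f * g|mX] =ᵐ[μ] 0 := by
      filter_upwards [hpull, hcg] with ω h1 h2
      simp only [Pi.mul_apply, Pi.zero_apply] at *
      rw [h1, h2]; ring
    rw [integral_congr_ae this]
    simp
  -- put it together
  have hsplit : (∫ ω, (lam (eh ω) + lam' (eh ω) * (A ω - eh ω)) ∂μ) - ∫ ω, lam (e ω) ∂μ
      = ∫ ω, (- R ω) ∂μ := by
    have h1 : (∫ ω, (lam (eh ω) + lam' (eh ω) * (A ω - eh ω)) ∂μ)
        = ∫ ω, (f * g) ω ∂μ + ∫ ω, (lam (eh ω) + lam' (eh ω) * (e ω - eh ω)) ∂μ := by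
      rw [← integral_add hfgint hT]
      congr 1
      funext ω
      simp only [hfg_eq]
      ring
    rw [h1, hzero, zero_add, ← integral_sub hT hlame]
    congr 1
    funext ω
    rw [hRdef]
    ring
  rw [hsplit]
  calc |∫ ω, (- R ω) ∂μ| ≤ ∫ ω, |(- R ω)| ∂μ := by simpa [Real.norm_eq_abs] using norm_integral_le_integral_norm (fun ω => - R ω) (μ := μ)
    _ = ∫ ω, |R ω| ∂μ := by congr 1; funext ω; rw [abs_neg]
    _ ≤ ∫ ω, L * (eh ω - e ω) ^ 2 ∂μ := integral_mono_ae hRint.abs (hsq.const_mul L) hRbound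
    _ = L * ∫ ω, (eh ω - e ω) ^ 2 ∂μ := integral_const_mul L _
end
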